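/- Let β>0, ψ>0 and κ∈(0,β²/4) with e^{−βψ} ≥ 4κ/β². Set σ₁ = (β+√(β²−4κ))/2 and σ₂ = (β−√(β²−4κ))/2. Then 0 < σ₂ < σ₁, σ₂/σ₁ < e^{(σ₂−σ₁)ψ}, and there exist constants C₁ < 0 < C₂ with C₁σ₁ + C₂σ₂ = 0 and C₁e^{σ₁ψ} + C₂e^{σ₂ψ} = 1 such that the function φ(θ) = C₁e^{σ₁θ} + C₂e^{σ₂θ} satisfies, for every θ∈[0,ψ]: φ(θ) ≥ 1, φ(θ) ≤ φ(0) = C₁ + C₂, φ′(θ) ≤ 0 and φ″(θ) ≤ 0, with φ′(0) = 0. -/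

import Mathlib

open Real Filter Metric Set Topology

noncomputable section

/-- Euclidean space ℝ^N. -/
abbrev EucSp (N : ℕ) := EuclideanSpace ℝ (Fin N)

namespace Paper

variable {N : ℕ}

/-- Frobenius norm of a matrix. -/
def frobNorm (X : Matrix (Fin N) (Fin N) ℝ) : ℝ :=
  Real.sqrt (∑ i, ∑ j, (X i j) ^ 2)

/-- Hessian matrix of a function at a point, in the standard basis of ℝ^N. -/
def hess (φ : EucSp N → ℝ) (x : EucSp N) : Matrix (Fin N) (Fin N) ℝ :=
  fun i j => iteratedFDeriv ℝ 2 φ x ![EuclideanSpace.single i 1, EuclideanSpace.single j 1]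

/-- The first-order term  h(x)·∇φ(x) |∇φ(x)|^α. -/
def drift (h : EucSp N → EucSp N) (α : ℝ) (φ : EucSp N → ℝ) (x : EucSp N) : ℝ :=
  (inner ℝ (h x) (gradient φ x) : ℝ) * ‖gradient φ x‖ ^ α

/-- |s|^α s -/
def sgnPow (α s : ℝ) : ℝ := |s| ^ α * s

/-- Viscosity supersolution of  F(x,∇v,D²v) + h(x)·∇v|∇v|^α ≤ f(x,v)  in Ω:
at every point of Ω, either v is locally constant ≡ c and 0 ≤ f(·,c) nearby, or every C²
test function with nonvanishing gradient touching from below satisfies the inequality. -/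
def IsViscositySuper (Ω : Set (EucSp N))
    (F : EucSp N → EucSp N → Matrix (Fin N) (Fin N) ℝ → ℝ)
    (h : EucSp N → EucSp N) (α : ℝ) (f : EucSp N → ℝ → ℝ) (v : EucSp N → ℝ) : Prop :=
  ∀ x₀ ∈ Ω,
    (∃ δ > 0, ball x₀ δ ⊆ Ω ∧ (∀ x ∈ ball x₀ δ, v x = v x₀) ∧
      ∀ x ∈ ball x₀ δ, 0 ≤ f x (v x₀)) ∨
    (∀ φ : EucSp N → ℝ, ContDiff ℝ 2 φ → gradient φ x₀ ≠ 0 →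
      IsLocalMinOn (fun x => v x - φ x) Ω x₀ →
      F x₀ (gradient φ x₀) (hess φ x₀) + drift h α φ x₀ ≤ f x₀ (v x₀))

/-- Viscosity subsolution of  F(x,∇v,D²v) + h(x)·∇v|∇v|^α ≥ f(x,v)  in Ω. -/
def IsViscositySub (Ω : Set (EucSp N))
    (F : EucSp N → EucSp N → Matrix (Fin N) (Fin N) ℝ → ℝ)
    (h : EucSp N → EucSp N) (α : ℝ) (f : EucSp N → ℝ → ℝ) (v : EucSp N → ℝ) : Prop :=
  ∀ x₀ ∈ Ω,
    (∃ δ > 0, ball x₀ δ ⊆ Ω ∧ (∀ x ∈ ball x₀ δ, v x = v x₀) ∧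
      ∀ x ∈ ball x₀ δ, f x (v x₀) ≤ 0) ∨
    (∀ φ : EucSp N → ℝ, ContDiff ℝ 2 φ → gradient φ x₀ ≠ 0 →
      IsLocalMaxOn (fun x => v x - φ x) Ω x₀ →
      f x₀ (v x₀) ≤ F x₀ (gradient φ x₀) (hess φ x₀) + drift h α φ x₀)

/-- Viscosity solution of  F(x,∇v,D²v) + h(x)·∇v|∇v|^α = f(x,v)  in Ω. -/
def IsViscositySolution (Ω : Set (EucSp N))
    (F : EucSp N → EucSp N → Matrix (Fin N) (Fin N) ℝ → ℝ)
    (h : EucSp N → EucSp N) (α : ℝ) (f : EucSp N → ℝ → ℝ) (v : EucSp N → ℝ) : Prop :=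
  IsViscositySuper Ω F h α f v ∧ IsViscositySub Ω F h α f v

/-- (H1): homogeneity -/
def H1 (D : Set (EucSp N)) (F : EucSp N → EucSp N → Matrix (Fin N) (Fin N) ℝ → ℝ)
    (α : ℝ) : Prop :=
  ∀ x ∈ D, ∀ p : EucSp N, p ≠ 0 → ∀ X : Matrix (Fin N) (Fin N) ℝ,
    ∀ t : ℝ, t ≠ 0 → ∀ μ : ℝ, 0 ≤ μ →
      F x (t • p) (μ • X) = |t| ^ α * μ * F x p X

/-- (H2): uniform (degenerate) ellipticity -/
def H2 (D : Set (EucSp N)) (F : EucSp N → EucSp N → Matrix (Fin N) (Fin N) ℝ → ℝ)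
    (α a A : ℝ) : Prop :=
  ∀ x ∈ D, ∀ p : EucSp N, p ≠ 0 → ∀ M P : Matrix (Fin N) (Fin N) ℝ, P.PosSemidef →
    a * ‖p‖ ^ α * P.trace ≤ F x p (M + P) - F x p M ∧
    F x p (M + P) - F x p M ≤ A * ‖p‖ ^ α * P.trace

/-- (H3): continuity in x -/
def H3 (D : Set (EucSp N)) (F : EucSp N → EucSp N → Matrix (Fin N) (Fin N) ℝ → ℝ)
    (α : ℝ) : Prop :=
  ∃ ωt : ℝ → ℝ, Continuous ωt ∧ ωt 0 = 0 ∧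
    ∀ x ∈ D, ∀ y ∈ D, ∀ p : EucSp N, p ≠ 0 → ∀ X : Matrix (Fin N) (Fin N) ℝ,
      |F x p X - F y p X| ≤ ωt ‖x - y‖ * ‖p‖ ^ α * frobNorm X

/-- (H4): the usual structural condition for comparison -/
def H4 (D : Set (EucSp N)) (F : EucSp N → EucSp N → Matrix (Fin N) (Fin N) ℝ → ℝ) : Prop :=
  ∃ ω : ℝ → ℝ, Continuous ω ∧ ω 0 = 0 ∧
    ∀ ζ : ℝ, 0 < ζ → ∀ X Y : Matrix (Fin N) (Fin N) ℝ,
      (Matrix.fromBlocks X 0 0 Y + ζ • (1 : Matrix (Fin N ⊕ Fin N) (Fin N ⊕ Fin N) ℝ)).PosSemidef →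
      ((4 * ζ) • Matrix.fromBlocks (1 : Matrix (Fin N) (Fin N) ℝ) (-1) (-1) 1
          - Matrix.fromBlocks X 0 0 Y).PosSemidef →
      ∀ x ∈ D, ∀ y ∈ D, x ≠ y →
        F x (ζ • (x - y)) X - F y (ζ • (x - y)) (-Y) ≤ ω (ζ * ‖x - y‖ ^ 2)

/-- (H5): hypothesis on the drift h -/
def H5 (h : EucSp N → EucSp N) (α : ℝ) : Prop :=
  (α ≤ 0 ∧ ∃ C : ℝ, 0 ≤ C ∧ ∀ x y : EucSp N, ‖h x - h y‖ ≤ C * ‖x - y‖ ^ (1 + α)) ∨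
  (0 < α ∧ ∀ x y : EucSp N, (inner ℝ (h x - h y) (x - y) : ℝ) ≤ 0)

/-- uniform exterior cone condition with parameters ψ (opening) and r (height) -/
def UnifExtCone (Ω : Set (EucSp N)) (ψ r : ℝ) : Prop :=
  ∀ z ∈ frontier Ω, ∃ n : EucSp N, ‖n‖ = 1 ∧
    ∀ x ∈ Ω ∩ ball z r, ‖x - z‖ * Real.cos ψ < (inner ℝ (x - z) n : ℝ)

/-- uniform exterior cone condition -/
def ExtConeCond (Ω : Set (EucSp N)) : Prop :=
  ∃ ψ ∈ Set.Ioo (0 : ℝ) π, ∃ r > (0 : ℝ), UnifExtCone Ω ψ r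

/-- A bounded `C²` (regular) domain, described by a `C²` defining function with
nonvanishing gradient on the boundary. -/
def IsC2Domain (Ω : Set (EucSp N)) : Prop :=
  ∃ ρ : EucSp N → ℝ, ContDiff ℝ 2 ρ ∧ Ω = {x | ρ x < 0} ∧
    frontier Ω = {x | ρ x = 0} ∧ ∀ x ∈ frontier Ω, gradient ρ x ≠ 0

/-- right hand side corresponding to the eigenvalue equation
F[u] + h·∇u|∇u|^α + (V+λ)|u|^α u = 0 -/
def eigenRHS (V : EucSp N → ℝ) (lam α : ℝ) : EucSp N → ℝ → ℝ :=
  fun x s => -((V x + lam) * sgnPow α s)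

/-- The principal eigenvalue λ̄(O). -/
def lambdaBar (O : Set (EucSp N))
    (F : EucSp N → EucSp N → Matrix (Fin N) (Fin N) ℝ → ℝ)
    (h : EucSp N → EucSp N) (V : EucSp N → ℝ) (α : ℝ) : ℝ :=
  sSup {lam : ℝ | ∃ u : EucSp N → ℝ, ContinuousOn u O ∧ (∃ C : ℝ, ∀ x ∈ O, |u x| ≤ C) ∧
    (∀ x ∈ O, 0 < u x) ∧ IsViscositySuper O F h α (eigenRHS V lam α) u}

/-- λ_e: the supremum of λ̄(Ω') over bounded regular domains Ω' compactly containing Ω. -/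
def lambdaE (Ω : Set (EucSp N))
    (F : EucSp N → EucSp N → Matrix (Fin N) (Fin N) ℝ → ℝ)
    (h : EucSp N → EucSp N) (V : EucSp N → ℝ) (α : ℝ) : ℝ :=
  sSup {lam : ℝ | ∃ Ω' : Set (EucSp N), IsOpen Ω' ∧ Bornology.IsBounded Ω' ∧
    IsConnected Ω' ∧ IsC2Domain Ω' ∧ closure Ω ⊆ Ω' ∧ lam = lambdaBar Ω' F h V α}

/-- λ̃: the supremum of λ admitting a supersolution positive on the closure of Ω. -/
def lambdaTilde (Ω : Set (EucSp N))
    (F : EucSp N → EucSp N → Matrix (Fin N) (Fin N) ℝ → ℝ)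
    (h : EucSp N → EucSp N) (V : EucSp N → ℝ) (α : ℝ) : ℝ :=
  sSup {lam : ℝ | ∃ u : EucSp N → ℝ, ContinuousOn u (closure Ω) ∧
    (∀ x ∈ closure Ω, 0 < u x) ∧ IsViscositySuper Ω F h α (eigenRHS V lam α) u}

/-- γ-Hölder continuity on a set. -/
def IsHolderOn (φ : EucSp N → ℝ) (S : Set (EucSp N)) (γ : ℝ) : Prop :=
  ∃ C > (0 : ℝ), ∀ x ∈ S, ∀ y ∈ S, |φ x - φ y| ≤ C * ‖x - y‖ ^ γ

/-- Pucci maximal operator M⁺_{a,A} -/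
def pucciPlus (a A : ℝ) (M : Matrix (Fin N) (Fin N) ℝ) : ℝ :=
  if hM : M.IsHermitian then
    ∑ i, (A * max (hM.eigenvalues i) 0 + a * min (hM.eigenvalues i) 0)
  else 0

/-- Pucci minimal operator M⁻_{a,A} -/
def pucciMinus (a A : ℝ) (M : Matrix (Fin N) (Fin N) ℝ) : ℝ :=
  if hM : M.IsHermitian then
    ∑ i, (a * max (hM.eigenvalues i) 0 + A * min (hM.eigenvalues i) 0)
  else 0

/-- rank-one (outer) product u ⊗ v -/
def outer (u v : EucSp N) : Matrix (Fin N) (Fin N) ℝ :=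
  Matrix.of fun i j => u i * v j

end Paper

open Paper

/-!
Solving `φ'(0) = 0`, `φ(ψ) = 1` gives `C₁ = -σ₂/Δ`, `C₂ = σ₁/Δ` with
`Δ = σ₁ e^{σ₂ψ} - σ₂ e^{σ₁ψ}`, which is positive exactly when `σ₂/σ₁ < e^{(σ₂-σ₁)ψ}`. That holds
because, by Vieta, `σ₂/σ₁ < 4σ₁σ₂/(σ₁+σ₂)² = 4κ/β² ≤ e^{-βψ} ≤ e^{(σ₂-σ₁)ψ}`.
Once `C₁σ₁ + C₂σ₂ = 0` with `C₂ > 0` and `σ₂ < σ₁`, both `φ'` and `φ''` are profiles of the same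
shape with coefficients `(a, b)`, `a + b ≤ 0 ≤ b`, hence nonpositive on `θ ≥ 0`; so `φ` decreases on
`[0, ψ]` from `φ(0) = C₁ + C₂` to `φ(ψ) = 1` and is concave there.
-/

def expProfile (C₁ C₂ σ₁ σ₂ θ : ℝ) : ℝ :=
  C₁ * exp (σ₁ * θ) + C₂ * exp (σ₂ * θ)

section expProfile

variable {C₁ C₂ σ₁ σ₂ : ℝ}

lemma expProfile_zero : expProfile C₁ C₂ σ₁ σ₂ 0 = C₁ + C₂ := by
  simp [expProfile]

lemma hasDerivAt_expProfile (θ : ℝ) :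
    HasDerivAt (expProfile C₁ C₂ σ₁ σ₂) (expProfile (C₁ * σ₁) (C₂ * σ₂) σ₁ σ₂ θ) θ := by
  have h₁ := (((hasDerivAt_id θ).const_mul σ₁).exp).const_mul C₁
  have h₂ := (((hasDerivAt_id θ).const_mul σ₂).exp).const_mul C₂
  exact (h₁.add h₂).congr_deriv (by simp only [expProfile, id]; ring)

lemma deriv_expProfile :
    deriv (expProfile C₁ C₂ σ₁ σ₂) = expProfile (C₁ * σ₁) (C₂ * σ₂) σ₁ σ₂ :=
  funext fun θ => (hasDerivAt_expProfile θ).deriv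

lemma expProfile_nonpos (hC : C₁ + C₂ ≤ 0) (hC₂ : 0 ≤ C₂) (hσ : σ₂ ≤ σ₁) {θ : ℝ}
    (hθ : 0 ≤ θ) : expProfile C₁ C₂ σ₁ σ₂ θ ≤ 0 := by
  have hexp : exp (σ₂ * θ) ≤ exp (σ₁ * θ) := exp_le_exp.mpr (by nlinarith)
  have hC₁ : C₁ * exp (σ₁ * θ) ≤ -C₂ * exp (σ₁ * θ) :=
    mul_le_mul_of_nonneg_right (by linarith) (exp_pos _).le
  have hC₂exp : C₂ * exp (σ₂ * θ) ≤ C₂ * exp (σ₁ * θ) := mul_le_mul_of_nonneg_left hexp hC₂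
  unfold expProfile
  linarith

lemma antitoneOn_expProfile (hC : C₁ * σ₁ + C₂ * σ₂ ≤ 0) (hC₂ : 0 ≤ C₂ * σ₂)
    (hσ : σ₂ ≤ σ₁) : AntitoneOn (expProfile C₁ C₂ σ₁ σ₂) (Ici 0) := by
  refine antitoneOn_of_deriv_nonpos (convex_Ici 0)
    (fun θ _ => (hasDerivAt_expProfile θ).continuousAt.continuousWithinAt)
    (fun θ _ => (hasDerivAt_expProfile θ).differentiableAt.differentiableWithinAt) ?_
  intro θ hθ
  rw [interior_Ici] at hθ
  rw [deriv_expProfile]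
  exact expProfile_nonpos hC hC₂ hσ hθ.le

lemma exists_expProfile_eq_one {ψ : ℝ} (hσ₁ : 0 < σ₁) (hσ₂ : 0 < σ₂)
    (h : σ₂ / σ₁ < exp ((σ₂ - σ₁) * ψ)) :
    ∃ C₁ C₂ : ℝ, C₁ < 0 ∧ 0 < C₂ ∧ C₁ * σ₁ + C₂ * σ₂ = 0 ∧
      expProfile C₁ C₂ σ₁ σ₂ ψ = 1 := by
  set Δ := σ₁ * exp (σ₂ * ψ) - σ₂ * exp (σ₁ * ψ)
  have hΔ : 0 < Δ := by
    rw [sub_mul, exp_sub, div_lt_div_iff₀ hσ₁ (exp_pos _)] at h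
    linarith
  refine ⟨-σ₂ / Δ, σ₁ / Δ, div_neg_of_neg_of_pos (neg_neg_of_pos hσ₂) hΔ,
    div_pos hσ₁ hΔ, by ring, ?_⟩
  unfold expProfile
  field_simp
  ring

end expProfile

lemma quadratic_roots_spec {β κ σ₁ σ₂ : ℝ} (hβ : 0 < β) (hκ : 0 < κ) (hκ' : κ < β ^ 2 / 4)
    (hσ₁ : σ₁ = (β + √(β ^ 2 - 4 * κ)) / 2) (hσ₂ : σ₂ = (β - √(β ^ 2 - 4 * κ)) / 2) :
    0 < σ₂ ∧ σ₂ < σ₁ ∧ σ₁ + σ₂ = β ∧ σ₁ * σ₂ = κ := by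
  have hd : 0 < β ^ 2 - 4 * κ := by linarith
  have hs : √(β ^ 2 - 4 * κ) < β := (sqrt_lt' hβ).mpr (by linarith)
  have hs₀ : 0 < √(β ^ 2 - 4 * κ) := sqrt_pos.mpr hd
  have hs₂ := sq_sqrt hd.le
  subst hσ₁ hσ₂
  exact ⟨by linarith, by linarith, by ring, by linear_combination hs₂ / (-4)⟩

lemma div_lt_four_mul_div_sq {σ₁ σ₂ : ℝ} (hσ₂ : 0 < σ₂) (h : σ₂ < σ₁) :
    σ₂ / σ₁ < 4 * (σ₁ * σ₂) / (σ₁ + σ₂) ^ 2 := by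
  rw [div_lt_div_iff₀ (hσ₂.trans h) (pow_pos (by linarith) 2)]
  nlinarith [mul_pos hσ₂ (sub_pos.mpr h), mul_pos hσ₂ (hσ₂.trans h)]

lemma div_lt_exp_sub_mul {σ₁ σ₂ ψ : ℝ} (hσ₂ : 0 < σ₂) (h : σ₂ < σ₁) (hψ : 0 ≤ ψ)
    (hexp : 4 * (σ₁ * σ₂) / (σ₁ + σ₂) ^ 2 ≤ exp (-(σ₁ + σ₂) * ψ)) :
    σ₂ / σ₁ < exp ((σ₂ - σ₁) * ψ) :=
  calc σ₂ / σ₁ < 4 * (σ₁ * σ₂) / (σ₁ + σ₂) ^ 2 := div_lt_four_mul_div_sq hσ₂ h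
    _ ≤ exp (-(σ₁ + σ₂) * ψ) := hexp
    _ ≤ exp ((σ₂ - σ₁) * ψ) := exp_le_exp.mpr (by nlinarith)

/-- the one dimensional profile φ(θ) = C₁e^{σ₁θ} + C₂e^{σ₂θ} used in the
construction of the exterior cone barrier. -/
theorem stmt17_barrier_profile
    (β ψ κ : ℝ) (hβ : 0 < β) (hψ : 0 < ψ) (hκ : 0 < κ) (hκ' : κ < β ^ 2 / 4)
    (hexp : 4 * κ / β ^ 2 ≤ Real.exp (-β * ψ))
    (σ₁ σ₂ : ℝ)
    (hσ₁ : σ₁ = (β + Real.sqrt (β ^ 2 - 4 * κ)) / 2)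
    (hσ₂ : σ₂ = (β - Real.sqrt (β ^ 2 - 4 * κ)) / 2) :
    0 < σ₂ ∧ σ₂ < σ₁ ∧ σ₂ / σ₁ < Real.exp ((σ₂ - σ₁) * ψ) ∧
    ∃ C₁ C₂ : ℝ, C₁ < 0 ∧ 0 < C₂ ∧
      C₁ * σ₁ + C₂ * σ₂ = 0 ∧
      C₁ * Real.exp (σ₁ * ψ) + C₂ * Real.exp (σ₂ * ψ) = 1 ∧
      C₁ * Real.exp (σ₁ * 0) + C₂ * Real.exp (σ₂ * 0) = C₁ + C₂ ∧
      deriv (fun θ => C₁ * Real.exp (σ₁ * θ) + C₂ * Real.exp (σ₂ * θ)) 0 = 0 ∧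
      ∀ θ ∈ Set.Icc (0 : ℝ) ψ,
        1 ≤ C₁ * Real.exp (σ₁ * θ) + C₂ * Real.exp (σ₂ * θ) ∧
        C₁ * Real.exp (σ₁ * θ) + C₂ * Real.exp (σ₂ * θ) ≤ C₁ + C₂ ∧
        deriv (fun θ => C₁ * Real.exp (σ₁ * θ) + C₂ * Real.exp (σ₂ * θ)) θ ≤ 0 ∧
        deriv (deriv (fun θ => C₁ * Real.exp (σ₁ * θ) + C₂ * Real.exp (σ₂ * θ))) θ ≤ 0 := by
  obtain ⟨hσ₂pos, hlt, hsum, hprod⟩ := quadratic_roots_spec hβ hκ hκ' hσ₁ hσ₂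
  have hratio : σ₂ / σ₁ < exp ((σ₂ - σ₁) * ψ) :=
    div_lt_exp_sub_mul hσ₂pos hlt hψ.le (by rwa [hsum, hprod])
  obtain ⟨C₁, C₂, hC₁, hC₂, hslope, hψ_one⟩ :=
    exists_expProfile_eq_one (hσ₂pos.trans hlt) hσ₂pos hratio
  have hC₂σ₂ : 0 ≤ C₂ * σ₂ := (mul_pos hC₂ hσ₂pos).le
  have hanti := antitoneOn_expProfile hslope.le hC₂σ₂ hlt.le
  refine ⟨hσ₂pos, hlt, hratio, C₁, C₂, hC₁, hC₂, hslope, hψ_one, expProfile_zero, ?_, ?_⟩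
  · change deriv (expProfile C₁ C₂ σ₁ σ₂) 0 = 0
    rw [deriv_expProfile, expProfile_zero, hslope]
  rintro θ ⟨hθ₀, hθψ⟩
  have hle_start := hanti self_mem_Ici hθ₀ hθ₀
  rw [expProfile_zero] at hle_start
  refine ⟨hψ_one ▸ hanti hθ₀ (hθ₀.trans hθψ) hθψ, hle_start, ?_, ?_⟩
  · change deriv (expProfile C₁ C₂ σ₁ σ₂) θ ≤ 0
    rw [deriv_expProfile]
    exact expProfile_nonpos hslope.le hC₂σ₂ hlt.le hθ₀
  · change deriv (deriv (expProfile C₁ C₂ σ₁ σ₂)) θ ≤ 0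
    rw [deriv_expProfile, deriv_expProfile]
    have hcurv : C₁ * σ₁ * σ₁ + C₂ * σ₂ * σ₂ = -(C₂ * σ₂) * (σ₁ - σ₂) := by
      linear_combination σ₁ * hslope
    refine expProfile_nonpos ?_ (mul_nonneg hC₂σ₂ hσ₂pos.le) hlt.le hθ₀
    rw [hcurv]
    linarith [mul_nonneg hC₂σ₂ (sub_nonneg.mpr hlt.le)]
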